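/- Under the hypotheses on the Laurent series x_1(t), …, x_m(t), the leading coefficients satisfy p_{1,0} = p_{2,0} = ⋯ = p_{m,0} = 1. -/

import Mathlib

open Finset

/-- `dseq a i` is `gcd(a 1, …, a i)`. -/
def dseq (a : ℕ → ℕ) (i : ℕ) : ℕ := Finset.gcd (Finset.Icc 1 i) a

/-- `BAm m a ℓ` says that the tuple `(ℓ 1, …, ℓ m)` belongs to `B(A_m)`. -/
def BAm (m : ℕ) (a : ℕ → ℕ) (ℓ : ℕ → ℕ) : Prop :=
  (∀ j, (j < 1 ∨ m < j) → ℓ j = 0) ∧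
    ∀ i, 2 ≤ i → i ≤ m → ℓ i < dseq a (i - 1) / dseq a i

/-- `Telescopic m a` says that `(a 1, …, a m)` is a telescopic sequence. -/
def Telescopic (m : ℕ) (a : ℕ → ℕ) : Prop :=
  2 ≤ m ∧ (∀ i, 1 ≤ i → i ≤ m → 2 ≤ a i) ∧ dseq a m = 1 ∧
    ∀ i, 2 ≤ i → i ≤ m → ∃ ℓ : ℕ → ℕ, (∀ j, (j < 1 ∨ i ≤ j) → ℓ j = 0) ∧
      a i * dseq a (i - 1) = dseq a i * ∑ j ∈ Finset.Icc 1 m, ℓ j * a j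

/-!
Compare lowest-order terms. Each `x i` has order `-a i` and leading coefficient `p i`. In `F_i = 0`
the term `x i ^ (d_{i-1}/d_i)` has order `-a i d_{i-1}/d_i`, every `λ`-term has strictly larger
order, and `∏_{j<i} x j ^ ℓ_{i,j}` has order at least that; so the latter must have exactly this
order and `p i ^ (d_{i-1}/d_i) = ∏_{j<i} p j ^ ℓ_{i,j}`. Likewise `x 1 ^ b 1 ⋯ x m ^ b m = t` gives
`∏ p j ^ b j = 1`.

By induction on `i` these relations yield `p j ^ (a k / d_i) = p k ^ (a j / d_i)` for `j, k ≤ i`;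
dividing by `d_i` keeps the induction exact, since passing from `i` to `i + 1` only raises both
sides to the power `d_i / d_{i+1}`. At `i = m` we have `d_m = 1`, hence `p j ^ a k = p k ^ a j`,
and `(p i)⁻¹ = p i ^ (∑ a j b j) = (∏ p j ^ b j) ^ a i = 1`.
-/

namespace HahnSeries

variable {Γ R ι : Type*}

section LinearOrder

variable [LinearOrder Γ]

theorem orderTop_eq_of_coeff_ne_zero [Zero R] {x : R⟦Γ⟧} {g : Γ}
    (h0 : ∀ n < g, x.coeff n = 0) (hg : x.coeff g ≠ 0) : x.orderTop = g :=
  le_antisymm (orderTop_le_of_coeff_ne_zero hg)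
    (le_orderTop_iff_forall.2 fun n hn => h0 n (WithTop.coe_lt_coe.1 hn))

theorem leadingCoeff_eq_coeff_of_orderTop_eq [Zero R] {x : R⟦Γ⟧} {g : Γ} (h : x.orderTop = g) :
    x.leadingCoeff = x.coeff g := by
  simp [leadingCoeff, h]

theorem lt_orderTop_sum [AddCommMonoid R] {s : Finset ι} {f : ι → R⟦Γ⟧} {g : Γ}
    (h : ∀ i ∈ s, g < (f i).orderTop) : g < (∑ i ∈ s, f i).orderTop :=
  Finset.sum_induction f (fun y => g < y.orderTop)
    (fun _ _ hy hz => (lt_min hy hz).trans_le min_orderTop_le_orderTop_add) (by simp) h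

theorem orderTop_eq_and_leadingCoeff_eq_of_add_eq [AddMonoid R] {x y z : R⟦Γ⟧} (h : x + y = z)
    (hx : z.orderTop ≤ x.orderTop) (hy : z.orderTop < y.orderTop) :
    x.orderTop = z.orderTop ∧ x.leadingCoeff = z.leadingCoeff := by
  have hxz : x.orderTop = z.orderTop := by
    refine le_antisymm (not_lt.1 fun hlt => ?_) hx
    exact (lt_min hlt hy).not_ge (h ▸ min_orderTop_le_orderTop_add)
  exact ⟨hxz, by rw [← h, leadingCoeff_add_eq_left (hxz ▸ hy)]⟩

end LinearOrder

section Multiplicative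

variable [AddCommMonoid Γ] [LinearOrder Γ] [IsOrderedCancelAddMonoid Γ]

section Semiring

variable [Semiring R] [NoZeroDivisors R]

noncomputable def leadingCoeffHom : R⟦Γ⟧ →*₀ R where
  toFun := leadingCoeff
  map_zero' := leadingCoeff_zero
  map_one' := leadingCoeff_one
  map_mul' x y := leadingCoeff_mul x y

@[simp]
theorem leadingCoeffHom_apply (x : R⟦Γ⟧) : leadingCoeffHom x = x.leadingCoeff := rfl

theorem orderTop_pow [Nontrivial R] (x : R⟦Γ⟧) (n : ℕ) : (x ^ n).orderTop = n • x.orderTop := by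
  induction n with
  | zero => simp
  | succ n ih => rw [pow_succ, orderTop_mul, ih, succ_nsmul]

end Semiring

variable [CommSemiring R] [NoZeroDivisors R] [Nontrivial R]

theorem orderTop_prod (s : Finset ι) (f : ι → R⟦Γ⟧) :
    (∏ i ∈ s, f i).orderTop = ∑ i ∈ s, (f i).orderTop := by
  classical
  induction s using Finset.induction_on with
  | empty => simp
  | insert i s hi ih => rw [prod_insert hi, sum_insert hi, orderTop_mul, ih]

theorem orderTop_prod_pow {s : Finset ι} {x : ι → R⟦Γ⟧} {o : ι → Γ}
    (h : ∀ i ∈ s, (x i).orderTop = o i) (n : ι → ℕ) :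
    (∏ i ∈ s, x i ^ n i).orderTop = ↑(∑ i ∈ s, n i • o i) := by
  rw [orderTop_prod, WithTop.coe_sum]
  exact sum_congr rfl fun i hi => by rw [orderTop_pow, h i hi, WithTop.coe_nsmul]

end Multiplicative

end HahnSeries

section LaurentSeries

open HahnSeries

variable {R ι : Type*} [CommRing R] [IsDomain R] {x : ι → LaurentSeries R} {w : ι → ℕ}
  {t : Finset ι}

theorem orderTop_prod_pow_eq_neg_sum
    (hx : ∀ j ∈ t, (x j).orderTop = ((-w j : ℤ) : WithTop ℤ)) {s : Finset ι} (hst : s ⊆ t)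
    (n : ι → ℕ) :
    (∏ j ∈ s, x j ^ n j).orderTop = ((-(∑ j ∈ s, w j * n j : ℕ) : ℤ) : WithTop ℤ) := by
  rw [orderTop_prod_pow fun j hj => hx j (hst hj), WithTop.coe_inj]
  push_cast
  rw [← sum_neg_distrib]
  exact sum_congr rfl fun j _ => by rw [nsmul_eq_mul]; ring

theorem sum_mul_eq_and_leadingCoeff_pow_eq
    (hx : ∀ j ∈ t, (x j).orderTop = ((-w j : ℤ) : WithTop ℤ))
    {s : Finset ι} (hst : s ⊆ t) {i : ι} (hi : i ∈ t) {e : ℕ} {ℓ : ι → ℕ}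
    (hℓ : ∑ j ∈ t, w j * ℓ j = w i * e) {S : Finset (ι → ℕ)}
    (hS : ∀ J ∈ S, ∑ j ∈ t, w j * J j < w i * e) (c : (ι → ℕ) → R)
    (h : x i ^ e = ∏ j ∈ s, x j ^ ℓ j + ∑ J ∈ S, c J • ∏ j ∈ t, x j ^ J j) :
    ∑ j ∈ s, w j * ℓ j = w i * e ∧
      (x i).leadingCoeff ^ e = ∏ j ∈ s, (x j).leadingCoeff ^ ℓ j := by
  have hlhs : (x i ^ e).orderTop = ((-(w i * e : ℕ) : ℤ) : WithTop ℤ) := by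
    simpa using orderTop_prod_pow_eq_neg_sum hx (singleton_subset_iff.2 hi) fun _ => e
  have hP : (x i ^ e).orderTop ≤ (∏ j ∈ s, x j ^ ℓ j).orderTop := by
    rw [hlhs, orderTop_prod_pow_eq_neg_sum hx hst, WithTop.coe_le_coe, neg_le_neg_iff,
      Nat.cast_le, ← hℓ]
    exact sum_le_sum_of_subset hst
  have hQ : (x i ^ e).orderTop < (∑ J ∈ S, c J • ∏ j ∈ t, x j ^ J j).orderTop := by
    rw [hlhs]
    refine lt_orderTop_sum fun J hJ => lt_of_lt_of_le ?_ (orderTop_le_orderTop_smul _ _)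
    rw [orderTop_prod_pow_eq_neg_sum hx subset_rfl, WithTop.coe_lt_coe, neg_lt_neg_iff,
      Nat.cast_lt]
    exact hS J hJ
  obtain ⟨hord, hlc⟩ := orderTop_eq_and_leadingCoeff_eq_of_add_eq h.symm hP hQ
  refine ⟨?_, ?_⟩
  · rwa [orderTop_prod_pow_eq_neg_sum hx hst, hlhs, WithTop.coe_inj, neg_inj, Nat.cast_inj] at hord
  · simpa [← leadingCoeffHom_apply, map_prod, map_pow] using hlc.symm

end LaurentSeries

theorem zpow_sum₀ {G₀ ι : Type*} [CommGroupWithZero G₀] {g : G₀} (hg : g ≠ 0) (s : Finset ι)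
    (f : ι → ℤ) : g ^ (∑ i ∈ s, f i) = ∏ i ∈ s, g ^ f i := by
  classical
  induction s using Finset.induction_on with
  | empty => simp
  | insert i s hi ih => rw [sum_insert hi, prod_insert hi, zpow_add₀ hg, ih]

theorem eq_one_of_pow_eq_pow_of_prod_zpow_eq_one {G₀ ι : Type*} [CommGroupWithZero G₀]
    {s : Finset ι} {a : ι → ℕ} {b : ι → ℤ} (hab : ∑ j ∈ s, (a j : ℤ) * b j = -1) {p : ι → G₀}
    (hp : ∀ j ∈ s, ∀ k ∈ s, p j ^ a k = p k ^ a j) (hprod : ∏ j ∈ s, p j ^ b j = 1)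
    {i : ι} (hi : i ∈ s) (hpi : p i ≠ 0) : p i = 1 := by
  have hinv : (p i)⁻¹ = 1 :=
    calc (p i)⁻¹ = p i ^ ∑ j ∈ s, (a j : ℤ) * b j := by rw [hab, zpow_neg_one]
      _ = ∏ j ∈ s, (p i ^ a j) ^ b j := by
        rw [zpow_sum₀ hpi]
        simp only [zpow_mul, zpow_natCast]
      _ = ∏ j ∈ s, (p j ^ b j) ^ a i := prod_congr rfl fun j hj => by
        rw [hp i hi j hj, ← zpow_natCast, ← zpow_natCast, ← zpow_mul, ← zpow_mul, mul_comm]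
      _ = 1 := by rw [prod_pow, hprod, one_pow]
  exact inv_eq_one.1 hinv

section dseq

variable (a : ℕ → ℕ)

theorem dseq_dvd {i j : ℕ} (hj : j ∈ Icc 1 i) : dseq a i ∣ a j :=
  Finset.gcd_dvd hj

theorem dseq_dvd_dseq {i j : ℕ} (hji : j ≤ i) : dseq a i ∣ dseq a j :=
  Finset.gcd_mono (Icc_subset_Icc le_rfl hji)

theorem dseq_pos (ha : a 1 ≠ 0) {i : ℕ} (hi : 1 ≤ i) : 0 < dseq a i :=
  Nat.pos_of_ne_zero fun h => ha (Nat.eq_zero_of_zero_dvd (h ▸ dseq_dvd a (by simpa using hi)))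

theorem div_dseq_mul_div_dseq (ha : a 1 ≠ 0) {i j : ℕ} (hj : j ∈ Icc 1 i) :
    a j / dseq a i * (dseq a i / dseq a (i + 1)) = a j / dseq a (i + 1) := by
  rw [Nat.div_mul_div_comm (dseq_dvd a hj) (dseq_dvd_dseq a i.le_succ), mul_comm (a j),
    Nat.mul_div_mul_left _ _ (dseq_pos a ha ((mem_Icc.1 hj).1.trans (mem_Icc.1 hj).2))]

theorem sum_div_dseq_mul_eq (ha : a 1 ≠ 0) {i : ℕ} (hi : 1 ≤ i) {ℓ : ℕ → ℕ}
    (hℓ : ∑ j ∈ Icc 1 i, a j * ℓ j = a (i + 1) * (dseq a i / dseq a (i + 1))) :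
    ∑ j ∈ Icc 1 i, a j / dseq a i * ℓ j = a (i + 1) / dseq a (i + 1) := by
  refine Nat.eq_of_mul_eq_mul_left (dseq_pos a ha hi) ?_
  calc dseq a i * ∑ j ∈ Icc 1 i, a j / dseq a i * ℓ j = ∑ j ∈ Icc 1 i, a j * ℓ j := by
        rw [mul_sum]
        exact sum_congr rfl fun j hj => by rw [← mul_assoc, Nat.mul_div_cancel' (dseq_dvd a hj)]
    _ = a (i + 1) * (dseq a i / dseq a (i + 1)) := hℓ
    _ = dseq a i * (a (i + 1) / dseq a (i + 1)) := by
        rw [← Nat.mul_div_assoc _ (dseq_dvd_dseq a i.le_succ),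
          ← Nat.mul_div_assoc _ (dseq_dvd a (right_mem_Icc.2 (Nat.le_add_left 1 i))), mul_comm]

variable {M : Type*} [CommMonoid M] {p : ℕ → M}

theorem pow_div_dseq_succ_eq (ha : a 1 ≠ 0) {i : ℕ} {ℓ : ℕ → ℕ}
    (hℓ : ∑ j ∈ Icc 1 i, a j * ℓ j = a (i + 1) * (dseq a i / dseq a (i + 1)))
    (hrel : p (i + 1) ^ (dseq a i / dseq a (i + 1)) = ∏ j ∈ Icc 1 i, p j ^ ℓ j)
    (ih : ∀ j ∈ Icc 1 i, ∀ k ∈ Icc 1 i, p j ^ (a k / dseq a i) = p k ^ (a j / dseq a i))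
    {k : ℕ} (hk : k ∈ Icc 1 i) :
    p (i + 1) ^ (a k / dseq a (i + 1)) = p k ^ (a (i + 1) / dseq a (i + 1)) :=
  calc p (i + 1) ^ (a k / dseq a (i + 1))
      = (p (i + 1) ^ (dseq a i / dseq a (i + 1))) ^ (a k / dseq a i) := by
        rw [← pow_mul, mul_comm, div_dseq_mul_div_dseq a ha hk]
    _ = ∏ j ∈ Icc 1 i, (p j ^ (a k / dseq a i)) ^ ℓ j := by
        rw [hrel, ← prod_pow]
        exact prod_congr rfl fun j _ => pow_right_comm _ _ _
    _ = ∏ j ∈ Icc 1 i, p k ^ (a j / dseq a i * ℓ j) :=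
        prod_congr rfl fun j hj => by rw [ih j hj k hk, pow_mul]
    _ = p k ^ (a (i + 1) / dseq a (i + 1)) := by
        rw [prod_pow_eq_pow_sum,
          sum_div_dseq_mul_eq a ha ((mem_Icc.1 hk).1.trans (mem_Icc.1 hk).2) hℓ]

theorem pow_div_dseq_eq (ha : a 1 ≠ 0) {m : ℕ} (ℓ : ℕ → ℕ → ℕ)
    (hrel : ∀ i, 2 ≤ i → i ≤ m →
      ∑ j ∈ Icc 1 (i - 1), a j * ℓ i j = a i * (dseq a (i - 1) / dseq a i) ∧
        p i ^ (dseq a (i - 1) / dseq a i) = ∏ j ∈ Icc 1 (i - 1), p j ^ ℓ i j) :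
    ∀ i ≤ m, ∀ j ∈ Icc 1 i, ∀ k ∈ Icc 1 i, p j ^ (a k / dseq a i) = p k ^ (a j / dseq a i) := by
  intro i
  induction i with
  | zero => simp
  | succ i ih =>
    intro him
    have ih := ih (by omega)
    have hsplit : ∀ j ∈ Icc 1 (i + 1), j = i + 1 ∨ j ∈ Icc 1 i := fun j hj => by
      simp only [mem_Icc] at hj ⊢; omega
    have hnew : ∀ k ∈ Icc 1 i,
        p (i + 1) ^ (a k / dseq a (i + 1)) = p k ^ (a (i + 1) / dseq a (i + 1)) := by
      intro k hk
      have hi : 2 ≤ i + 1 := by simp only [mem_Icc] at hk; omega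
      obtain ⟨hℓ, hp⟩ := hrel (i + 1) hi him
      exact pow_div_dseq_succ_eq a ha hℓ hp ih hk
    intro j hj k hk
    rcases hsplit j hj with rfl | hj <;> rcases hsplit k hk with rfl | hk
    · rfl
    · exact hnew k hk
    · exact (hnew j hj).symm
    · rw [← div_dseq_mul_div_dseq a ha hk, ← div_dseq_mul_div_dseq a ha hj, pow_mul, pow_mul,
        ih j hj k hk]

end dseq

/-- Suppose the Laurent series `x 1, …, x m ∈ ℂ((t))` have the form
`x i = t^{−a i}·Σ_{k≥0} p_{i,k} t^k` with `p_{i,0} ≠ 0` (hypotheses `hord`, `hlead`),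
satisfy the defining equations `F_i(x 1, …, x m) = 0` of the telescopic curve
(hypothesis `hF`, where `ℓmat i` is the unique `B(A_m)`-representation of
`a i * d(i−1)/d i` and `lam i J` are the coefficients `λ^{(i)}_J`, summed over the
finite set `S i` of all `J ∈ B(A_m)` with `Σ_k a k * J k < a i * d(i−1)/d i`),
and satisfy `x 1 ^ b 1 ⋯ x m ^ b m = t` where `Σ a j * b j = −1` (hypothesis `ht`).
Then the leading coefficients satisfy `p_{1,0} = ⋯ = p_{m,0} = 1`. -/
theorem leading_coeff_eq_one (m : ℕ) (a : ℕ → ℕ) (hT : Telescopic m a)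
    (ℓmat : ℕ → ℕ → ℕ)
    (hℓ : ∀ i, 2 ≤ i → i ≤ m → BAm m a (ℓmat i) ∧
      dseq a i * ∑ j ∈ Finset.Icc 1 m, a j * ℓmat i j = a i * dseq a (i - 1))
    (lam : ℕ → (ℕ → ℕ) → ℂ)
    (S : ℕ → Finset (ℕ → ℕ))
    (hS : ∀ i, 2 ≤ i → i ≤ m → ∀ J : ℕ → ℕ, J ∈ S i ↔ (BAm m a J ∧
      dseq a i * ∑ k ∈ Finset.Icc 1 m, a k * J k < a i * dseq a (i - 1)))
    (b : ℕ → ℤ) (hb : ∑ j ∈ Finset.Icc 1 m, (a j : ℤ) * b j = -1)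
    (x : ℕ → LaurentSeries ℂ)
    (hord : ∀ i, 1 ≤ i → i ≤ m → ∀ n : ℤ, n < -(a i : ℤ) → (x i).coeff n = 0)
    (hlead : ∀ i, 1 ≤ i → i ≤ m → (x i).coeff (-(a i : ℤ)) ≠ 0)
    (hF : ∀ i, 2 ≤ i → i ≤ m →
      x i ^ (dseq a (i - 1) / dseq a i) =
        ∏ j ∈ Finset.Icc 1 (i - 1), x j ^ ℓmat i j +
          ∑ J ∈ S i, lam i J • ∏ j ∈ Finset.Icc 1 m, x j ^ J j)
    (ht : ∏ j ∈ Finset.Icc 1 m, x j ^ b j = HahnSeries.single (1 : ℤ) (1 : ℂ)) :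
    ∀ i, 1 ≤ i → i ≤ m → (x i).coeff (-(a i : ℤ)) = 1 := by
  obtain ⟨hm, ha, hdm, -⟩ := hT
  have ha1 : a 1 ≠ 0 := by have := ha 1 le_rfl (by omega); omega
  have hx : ∀ j ∈ Icc 1 m, (x j).orderTop = ((-a j : ℤ) : WithTop ℤ) := fun j hj =>
    HahnSeries.orderTop_eq_of_coeff_ne_zero (hord j (mem_Icc.1 hj).1 (mem_Icc.1 hj).2)
      (hlead j (mem_Icc.1 hj).1 (mem_Icc.1 hj).2)
  have hprod : ∏ j ∈ Icc 1 m, (x j).leadingCoeff ^ b j = 1 := by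
    simpa [map_prod, map_zpow₀] using congrArg HahnSeries.leadingCoeffHom ht
  have hrel : ∀ i, 2 ≤ i → i ≤ m →
      ∑ j ∈ Icc 1 (i - 1), a j * ℓmat i j = a i * (dseq a (i - 1) / dseq a i) ∧
        (x i).leadingCoeff ^ (dseq a (i - 1) / dseq a i) =
          ∏ j ∈ Icc 1 (i - 1), (x j).leadingCoeff ^ ℓmat i j := by
    intro i hi him
    have hdvd : dseq a i ∣ dseq a (i - 1) := dseq_dvd_dseq a (Nat.sub_le i 1)
    refine sum_mul_eq_and_leadingCoeff_pow_eq hx (Icc_subset_Icc le_rfl (by omega))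
      (mem_Icc.2 ⟨by omega, him⟩) ?_ (fun J hJ => ?_) (lam i) (hF i hi him)
    · rw [← Nat.mul_div_assoc _ hdvd]
      exact Nat.eq_div_of_mul_eq_right (dseq_pos a ha1 (by omega)).ne' (hℓ i hi him).2
    · rw [← Nat.mul_div_assoc _ hdvd, Nat.lt_div_iff_mul_lt' (hdvd.mul_left _)]
      exact ((hS i hi him J).1 hJ).2
  have hpow := pow_div_dseq_eq a ha1 ℓmat hrel m le_rfl
  simp only [hdm, Nat.div_one] at hpow
  intro i hi him
  have hmem : i ∈ Icc 1 m := mem_Icc.2 ⟨hi, him⟩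
  have hlc := HahnSeries.leadingCoeff_eq_coeff_of_orderTop_eq (hx i hmem)
  rw [← hlc]
  exact eq_one_of_pow_eq_pow_of_prod_zpow_eq_one hb hpow hprod hmem (hlc ▸ hlead i hi him)
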